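/- arXiv:1210.3875 — 8 statements merged into one kernel-verified Lean document; each statement's English description precedes it below -/
import Mathlib

section
/- For all a, b > 0 with a ≠ b, the double inequality α·D(a,b) + (1−α)·H(a,b) < T(a,b) < β·D(a,b) + (1−β)·H(a,b) holds if and only if α ≤ 4/9 and β ≥ 2/π. -/
noncomputable def harmonicMean (a b : ℝ) : ℝ := 2 * a * b / (a + b)

noncomputable def seiffertT (a b : ℝ) : ℝ := (a - b) / (2 * Real.arctan ((a - b) / (a + b)))

noncomputable def contraD (a b : ℝ) : ℝ := (a ^ 3 + b ^ 3) / (a ^ 2 + b ^ 2)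

/-!
All three means are symmetric and homogeneous of degree one, and at `a = 1 + t`, `b = 1 - t` they
are `H = 1 - t²`, `D = (1 + 3t²)/(1 + t²)` and `T = t / arctan t`. As `H < D`, the theorem says
that `(T - H)/(D - H)` stays strictly between `4/9` and `2/π` on `0 < t < 1`, with these values as
its limits at `t = 0` and `t = 1`.

The bound `4/9` amounts to `arctan t < 9t(1 + t²)/((3 - t²)(3 + 5t²))`, whose two sides agree at
`0` while the difference has positive derivative. For `2/π`, with `c = 2/π`, the difference
`arctan t - t(1 + t²)/(1 + 3ct² + (c - 1)t⁴)` vanishes at `0` and at `1`, and its derivative is a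
positive factor times a decreasing function; so the difference first increases and then decreases,
and is positive in between. The limit at `0` follows from `t - t³/3 < arctan t`, the one at `1`
from continuity.
-/

open Real Set Filter Topology

noncomputable def mixDH (w a b : ℝ) : ℝ := w * contraD a b + (1 - w) * harmonicMean a b

lemma harmonicMean_comm (a b : ℝ) : harmonicMean a b = harmonicMean b a := by
  simp only [harmonicMean]; ring

lemma contraD_comm (a b : ℝ) : contraD a b = contraD b a := by
  simp only [contraD]; ring

lemma seiffertT_comm (a b : ℝ) : seiffertT a b = seiffertT b a := by
  simp only [seiffertT]
  rw [show (b - a) / (b + a) = -((a - b) / (a + b)) by ring, arctan_neg]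
  ring

lemma mixDH_comm (w a b : ℝ) : mixDH w a b = mixDH w b a := by
  simp only [mixDH, harmonicMean_comm a, contraD_comm a]

lemma harmonicMean_mul (c a b : ℝ) : harmonicMean (c * a) (c * b) = c * harmonicMean a b := by
  rcases eq_or_ne c 0 with rfl | hc
  · simp [harmonicMean]
  simp only [harmonicMean]
  rw [show c * a + c * b = c * (a + b) by ring, show 2 * (c * a) * (c * b) = c * (c * (2 * a * b))
    by ring, mul_div_mul_left _ _ hc, mul_div_assoc]

lemma contraD_mul (c a b : ℝ) : contraD (c * a) (c * b) = c * contraD a b := by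
  rcases eq_or_ne c 0 with rfl | hc
  · simp [contraD]
  simp only [contraD]
  rw [show (c * a) ^ 3 + (c * b) ^ 3 = c ^ 2 * (c * (a ^ 3 + b ^ 3)) by ring,
    show (c * a) ^ 2 + (c * b) ^ 2 = c ^ 2 * (a ^ 2 + b ^ 2) by ring,
    mul_div_mul_left _ _ (pow_ne_zero 2 hc), mul_div_assoc]

lemma seiffertT_mul (c a b : ℝ) : seiffertT (c * a) (c * b) = c * seiffertT a b := by
  rcases eq_or_ne c 0 with rfl | hc
  · simp [seiffertT]
  simp only [seiffertT]
  rw [← mul_sub, ← mul_add, mul_div_mul_left _ _ hc, mul_div_assoc]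

lemma mixDH_mul (w c a b : ℝ) : mixDH w (c * a) (c * b) = c * mixDH w a b := by
  simp only [mixDH, harmonicMean_mul, contraD_mul]; ring

lemma harmonicMean_lt_contraD {a b : ℝ} (ha : 0 < a) (hb : 0 < b) (hab : a ≠ b) :
    harmonicMean a b < contraD a b := by
  rw [harmonicMean, contraD, div_lt_div_iff₀ (by positivity) (by positivity)]
  have : 0 < (a - b) ^ 2 := by have := sub_ne_zero.2 hab; positivity
  -- the difference of the cross products is `(a - b) ^ 2 * (a ^ 2 + a * b + b ^ 2)`
  nlinarith [mul_pos this (by positivity : 0 < a ^ 2 + a * b + b ^ 2)]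

lemma mixDH_le_mixDH {w w' a b : ℝ} (hHD : harmonicMean a b ≤ contraD a b) (hw : w ≤ w') :
    mixDH w a b ≤ mixDH w' a b := by
  simp only [mixDH]
  nlinarith [mul_nonneg (sub_nonneg.2 hw) (sub_nonneg.2 hHD)]

lemma harmonicMean_one_add_one_sub (t : ℝ) : harmonicMean (1 + t) (1 - t) = 1 - t ^ 2 := by
  rw [harmonicMean]; ring

lemma contraD_one_add_one_sub (t : ℝ) :
    contraD (1 + t) (1 - t) = (1 + 3 * t ^ 2) / (1 + t ^ 2) := by
  rw [contraD, show (1 + t) ^ 3 + (1 - t) ^ 3 = 2 * (1 + 3 * t ^ 2) by ring,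
    show (1 + t) ^ 2 + (1 - t) ^ 2 = 2 * (1 + t ^ 2) by ring, mul_div_mul_left _ _ two_ne_zero]

lemma seiffertT_one_add_one_sub (t : ℝ) : seiffertT (1 + t) (1 - t) = t / arctan t := by
  rw [seiffertT]; ring_nf

lemma mixDH_one_add_one_sub (w t : ℝ) :
    mixDH w (1 + t) (1 - t) = (1 - t ^ 4 + w * t ^ 2 * (3 + t ^ 2)) / (1 + t ^ 2) := by
  rw [mixDH, harmonicMean_one_add_one_sub, contraD_one_add_one_sub]
  field_simp
  ring

lemma forall_of_forall_one_add_one_sub {P : ℝ → ℝ → Prop} (hsymm : ∀ a b, P a b → P b a)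
    (hmul : ∀ s a b, 0 < s → P a b → P (s * a) (s * b)) (h : ∀ t ∈ Ioo 0 1, P (1 + t) (1 - t))
    {a b : ℝ} (ha : 0 < a) (hb : 0 < b) (hab : a ≠ b) : P a b := by
  wlog hba : b < a generalizing a b
  · exact hsymm _ _ (this hb ha hab.symm (lt_of_le_of_ne (not_lt.1 hba) hab))
  have hs : 0 < (a + b) / 2 := by positivity
  have ht : (a - b) / (a + b) ∈ Ioo 0 1 :=
    ⟨div_pos (by linarith) (by positivity), (div_lt_one (by positivity)).2 (by linarith)⟩
  convert hmul _ _ _ hs (h _ ht) using 1 <;> field_simp <;> ring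

lemma lt_of_hasDerivAt_pos {ψ ψ' : ℝ → ℝ} {a b : ℝ} (hab : a < b)
    (hψ : ∀ x ∈ Icc a b, HasDerivAt ψ (ψ' x) x) (hpos : ∀ x ∈ Ioo a b, 0 < ψ' x) :
    ψ a < ψ b := by
  refine strictMonoOn_of_hasDerivWithinAt_pos (f' := ψ') (convex_Icc a b)
    (fun x hx ↦ (hψ x hx).continuousAt.continuousWithinAt) (fun x hx ↦ ?_) (fun x hx ↦ ?_)
    (left_mem_Icc.2 hab.le) (right_mem_Icc.2 hab.le) hab
  · rw [interior_Icc] at hx ⊢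
    exact (hψ x (Ioo_subset_Icc_self hx)).hasDerivWithinAt
  · rw [interior_Icc] at hx
    exact hpos x hx

lemma lt_of_hasDerivAt_neg {ψ ψ' : ℝ → ℝ} {a b : ℝ} (hab : a < b)
    (hψ : ∀ x ∈ Icc a b, HasDerivAt ψ (ψ' x) x) (hneg : ∀ x ∈ Ioo a b, ψ' x < 0) :
    ψ b < ψ a :=
  neg_lt_neg_iff.1 <| lt_of_hasDerivAt_pos (ψ := -ψ) (ψ' := -ψ') hab
    (fun x hx ↦ (hψ x hx).neg) (fun x hx ↦ neg_pos.2 (hneg x hx))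

lemma pos_of_hasDerivAt_mul_strictAntiOn {ψ w C : ℝ → ℝ} {a b t : ℝ} (ht : t ∈ Ioo a b)
    (hψ : ∀ x ∈ Icc a b, HasDerivAt ψ (w x * C x) x) (hw : ∀ x ∈ Ioo a b, 0 < w x)
    (hC : StrictAntiOn C (Ioo a b)) (ha : ψ a = 0) (hb : ψ b = 0) : 0 < ψ t := by
  rcases le_or_gt 0 (C t) with hCt | hCt
  · rw [← ha]
    refine lt_of_hasDerivAt_pos ht.1 (fun x hx ↦ hψ x ⟨hx.1, hx.2.trans ht.2.le⟩) fun x hx ↦ ?_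
    have hx' : x ∈ Ioo a b := ⟨hx.1, hx.2.trans ht.2⟩
    exact mul_pos (hw x hx') (hCt.trans_lt (hC hx' ht hx.2))
  · rw [← hb]
    refine lt_of_hasDerivAt_neg ht.2 (fun x hx ↦ hψ x ⟨ht.1.le.trans hx.1, hx.2⟩) fun x hx ↦ ?_
    have hx' : x ∈ Ioo a b := ⟨ht.1.trans hx.1, hx.2⟩
    exact mul_neg_of_pos_of_neg (hw x hx') ((hC ht hx' hx.1).trans hCt)

lemma sub_cube_div_three_lt_arctan {t : ℝ} (ht : 0 < t) : t - t ^ 3 / 3 < arctan t := by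
  have key := lt_of_hasDerivAt_pos (ψ := fun x ↦ arctan x - x + x ^ 3 / 3)
    (ψ' := fun x ↦ x ^ 4 / (1 + x ^ 2)) ht (fun x _ ↦ ?_) fun x hx ↦ by have := hx.1; positivity
  · simp only [arctan_zero] at key
    linarith
  · refine (((hasDerivAt_arctan x).fun_sub (hasDerivAt_id' x)).fun_add
      ((hasDerivAt_pow 3 x).div_const 3)).congr_deriv ?_
    field_simp
    ring

lemma arctan_lt_div_of_sq_lt_three {t : ℝ} (ht : 0 < t) (ht3 : t ^ 2 < 3) :
    arctan t < 9 * t * (1 + t ^ 2) / ((3 - t ^ 2) * (3 + 5 * t ^ 2)) := by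
  have hden : ∀ x ∈ Icc 0 t, 0 < (3 - x ^ 2) * (3 + 5 * x ^ 2) := fun x hx ↦ by
    have : x ^ 2 ≤ t ^ 2 := pow_le_pow_left₀ hx.1 hx.2 2
    exact mul_pos (by linarith) (by positivity)
  have key := lt_of_hasDerivAt_pos
    (ψ := fun x ↦ 9 * x * (1 + x ^ 2) / ((3 - x ^ 2) * (3 + 5 * x ^ 2)) - arctan x)
    (ψ' := fun x ↦ 4 * x ^ 4 * (81 + 102 * x ^ 2 + 5 * x ^ 4) /
      (((3 - x ^ 2) * (3 + 5 * x ^ 2)) ^ 2 * (1 + x ^ 2))) ht (fun x hx ↦ ?_)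
    fun x hx ↦ by have := hx.1; have := hden x (Ioo_subset_Icc_self hx); positivity
  · simp only [arctan_zero] at key
    linarith
  · have hx3 : 3 - x ^ 2 ≠ 0 := (pos_of_mul_pos_left (hden x hx) (by positivity)).ne'
    have hx := (hden x hx).ne'
    refine (((((hasDerivAt_id' x).const_mul 9).fun_mul ((hasDerivAt_pow 2 x).const_add 1)).fun_div
      (((hasDerivAt_pow 2 x).const_sub 3).fun_mul (((hasDerivAt_pow 2 x).const_mul 5).const_add 3))
      hx).fun_sub (hasDerivAt_arctan x)).congr_deriv ?_
    field_simp
    ring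

lemma rational_two_div_pi_lt_arctan {t : ℝ} (ht : t ∈ Ioo 0 1) :
    t * (1 + t ^ 2) / (1 + 3 * (2 / π) * t ^ 2 + (2 / π - 1) * t ^ 4) < arctan t := by
  set c := 2 / π with hc
  have hc₀ : 0.63 < c := by rw [hc, lt_div_iff₀ pi_pos]; nlinarith [pi_lt_d2]
  have hc₁ : c < 0.64 := by rw [hc, div_lt_iff₀ pi_pos]; nlinarith [pi_gt_d6]
  clear_value c
  set Q : ℝ → ℝ := fun x ↦ 1 + 3 * c * x ^ 2 + (c - 1) * x ^ 4 with hQ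
  have hQ_pos : ∀ x ∈ Icc (0 : ℝ) 1, 0 < Q x := fun x hx ↦ by
    have : x ^ 4 ≤ 1 := pow_le_one₀ hx.1 hx.2
    nlinarith [sq_nonneg x]
  -- `ψ' = w * C` with `w > 0`; `C` is a cubic in `x ^ 2` with negative non-constant coefficients
  set C : ℝ → ℝ := fun x ↦ (9 * c - 4) + (9 * c ^ 2 + 5 * c - 8) * x ^ 2 +
    (6 * c ^ 2 - 5 * c - 4) * x ^ 4 + (c ^ 2 - c) * x ^ 6 with hC
  have hC_anti : StrictAntiOn C (Ioo 0 1) := fun x hx y hy hxy ↦ by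
    have h2 : x ^ 2 < y ^ 2 := pow_lt_pow_left₀ hxy hx.1.le two_ne_zero
    have h4 : x ^ 4 < y ^ 4 := pow_lt_pow_left₀ hxy hx.1.le (by norm_num)
    have h6 : x ^ 6 < y ^ 6 := pow_lt_pow_left₀ hxy hx.1.le (by norm_num)
    have k₂ : 9 * c ^ 2 + 5 * c - 8 < 0 := by nlinarith
    have k₄ : 6 * c ^ 2 - 5 * c - 4 < 0 := by nlinarith
    have k₆ : c ^ 2 - c < 0 := by nlinarith
    simp only [hC]
    linarith [mul_lt_mul_of_neg_left h2 k₂, mul_lt_mul_of_neg_left h4 k₄,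
      mul_lt_mul_of_neg_left h6 k₆]
  have key := pos_of_hasDerivAt_mul_strictAntiOn (ψ := fun x ↦ arctan x - x * (1 + x ^ 2) / Q x)
    (w := fun x ↦ x ^ 2 / ((1 + x ^ 2) * Q x ^ 2)) (C := C) ht (fun x hx ↦ ?_)
    (fun x hx ↦ have := hQ_pos x (Ioo_subset_Icc_self hx); have := hx.1; by positivity) hC_anti
    (by simp) ?_
  · linarith
  · have hQx := (hQ_pos x hx).ne'
    refine ((hasDerivAt_arctan x).fun_sub (((hasDerivAt_id' x).fun_mul
      ((hasDerivAt_pow 2 x).const_add 1)).fun_div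
      ((((hasDerivAt_pow 2 x).const_mul (3 * c)).const_add 1).fun_add
        ((hasDerivAt_pow 4 x).const_mul (c - 1))) hQx)).congr_deriv ?_
    simp only [hQ, hC] at hQx ⊢
    rw [div_sub_div _ _ (by positivity) (pow_ne_zero 2 hQx), div_mul_eq_mul_div,
      div_eq_div_iff (mul_ne_zero (by positivity) (pow_ne_zero 2 hQx))
        (mul_ne_zero (by positivity) (pow_ne_zero 2 hQx))]
    ring
  · have : Q 1 = 4 * c := by simp only [hQ]; ring
    simp only [this, arctan_one, hc]
    field_simp
    ring

lemma mixDH_four_ninths_lt_seiffertT_one_add_one_sub {t : ℝ} (ht : t ∈ Ioo 0 1) :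
    mixDH (4 / 9) (1 + t) (1 - t) < seiffertT (1 + t) (1 - t) := by
  have h3 : 0 < 3 - t ^ 2 := by nlinarith [ht.1, ht.2]
  have hA := arctan_lt_div_of_sq_lt_three ht.1 (by linarith)
  rw [mixDH_one_add_one_sub, seiffertT_one_add_one_sub, lt_div_iff₀ (arctan_pos.2 ht.1)]
  rw [lt_div_iff₀ (by positivity)] at hA
  calc (1 - t ^ 4 + 4 / 9 * t ^ 2 * (3 + t ^ 2)) / (1 + t ^ 2) * arctan t
      = arctan t * ((3 - t ^ 2) * (3 + 5 * t ^ 2)) / (9 * (1 + t ^ 2)) := by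
        field_simp; ring
    _ < 9 * t * (1 + t ^ 2) / (9 * (1 + t ^ 2)) := by gcongr
    _ = t := by field_simp

lemma seiffertT_lt_mixDH_two_div_pi_one_add_one_sub {t : ℝ} (ht : t ∈ Ioo 0 1) :
    seiffertT (1 + t) (1 - t) < mixDH (2 / π) (1 + t) (1 - t) := by
  have hA := rational_two_div_pi_lt_arctan ht
  have hQ : 0 < 1 + 3 * (2 / π) * t ^ 2 + (2 / π - 1) * t ^ 4 := by
    have hc : 0 < 2 / π := by positivity
    have hc₁ : 2 / π < 1 := (div_lt_one pi_pos).2 (by linarith [pi_gt_three])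
    have : t ^ 4 < 1 := pow_lt_one₀ ht.1.le ht.2 (by norm_num)
    nlinarith [mul_nonneg hc.le (sq_nonneg t)]
  rw [div_lt_iff₀ hQ] at hA
  rw [mixDH_one_add_one_sub, seiffertT_one_add_one_sub, div_lt_div_iff₀ (arctan_pos.2 ht.1)
    (by positivity)]
  linarith

lemma mixDH_four_ninths_lt_seiffertT_lt_mixDH_two_div_pi {a b : ℝ} (ha : 0 < a) (hb : 0 < b)
    (hab : a ≠ b) : mixDH (4 / 9) a b < seiffertT a b ∧ seiffertT a b < mixDH (2 / π) a b := by
  refine forall_of_forall_one_add_one_sub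
    (P := fun a b ↦ mixDH (4 / 9) a b < seiffertT a b ∧ seiffertT a b < mixDH (2 / π) a b)
    (fun a b h ↦ ?_) (fun s a b hs h ↦ ?_)
    (fun t ht ↦ ⟨mixDH_four_ninths_lt_seiffertT_one_add_one_sub ht,
      seiffertT_lt_mixDH_two_div_pi_one_add_one_sub ht⟩) ha hb hab
  · rwa [mixDH_comm _ b, mixDH_comm _ b, seiffertT_comm b]
  · rw [mixDH_mul, mixDH_mul, seiffertT_mul]
    exact ⟨mul_lt_mul_of_pos_left h.1 hs, mul_lt_mul_of_pos_left h.2 hs⟩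

lemma le_four_ninths_of_forall_mixDH_lt_seiffertT {α : ℝ}
    (h : ∀ t ∈ Ioo 0 1, mixDH α (1 + t) (1 - t) < seiffertT (1 + t) (1 - t)) : α ≤ 4 / 9 := by
  set g : ℝ → ℝ := fun t ↦ (4 - t ^ 2) * (1 + t ^ 2) / ((3 - t ^ 2) * (3 + t ^ 2)) with hg
  have hg_tendsto : Tendsto g (𝓝[>] 0) (𝓝 (4 / 9)) := by
    have : ContinuousAt g 0 := by rw [hg]; fun_prop (disch := norm_num)
    convert this.tendsto.mono_left nhdsWithin_le_nhds using 2
    norm_num [hg]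
  refine ge_of_tendsto hg_tendsto ?_
  filter_upwards [Ioo_mem_nhdsGT one_pos] with t ht
  have h3 : 0 < 3 - t ^ 2 := by nlinarith [ht.1, ht.2]
  have hT : seiffertT (1 + t) (1 - t) < 3 / (3 - t ^ 2) := by
    rw [seiffertT_one_add_one_sub, div_lt_div_iff₀ (arctan_pos.2 ht.1) h3]
    linarith [sub_cube_div_three_lt_arctan ht.1]
  have hmix := (h t ht).trans hT
  rw [mixDH_one_add_one_sub, div_lt_div_iff₀ (by positivity) h3] at hmix
  rw [hg, le_div_iff₀ (by positivity)]
  have : t ^ 2 * (α * ((3 - t ^ 2) * (3 + t ^ 2))) < t ^ 2 * ((4 - t ^ 2) * (1 + t ^ 2)) := by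
    linarith
  exact (lt_of_mul_lt_mul_left this (sq_nonneg t)).le

lemma two_div_pi_le_of_forall_seiffertT_lt_mixDH {β : ℝ}
    (h : ∀ t ∈ Ioo 0 1, seiffertT (1 + t) (1 - t) < mixDH β (1 + t) (1 - t)) : 2 / π ≤ β := by
  set f : ℝ → ℝ := fun t ↦ mixDH β (1 + t) (1 - t) - seiffertT (1 + t) (1 - t) with hf
  have hf_cont : ContinuousAt f 1 := by
    have : arctan 1 ≠ 0 := by rw [arctan_one]; positivity
    simp only [hf, mixDH_one_add_one_sub, seiffertT_one_add_one_sub]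
    fun_prop (disch := first | positivity | assumption)
  have : 0 ≤ f 1 := ge_of_tendsto (hf_cont.tendsto.mono_left nhdsWithin_le_nhds) <| by
    filter_upwards [Ioo_mem_nhdsLT one_pos] with t ht
    exact sub_nonneg.2 (h t ht).le
  simp only [hf, mixDH_one_add_one_sub, seiffertT_one_add_one_sub, arctan_one] at this
  rw [div_le_iff₀ pi_pos]
  field_simp at this
  linarith

theorem stmt_0 (α β : ℝ) :
    (∀ a b : ℝ, 0 < a → 0 < b → a ≠ b →
      α * contraD a b + (1 - α) * harmonicMean a b < seiffertT a b ∧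
      seiffertT a b < β * contraD a b + (1 - β) * harmonicMean a b) ↔
    (α ≤ 4 / 9 ∧ 2 / Real.pi ≤ β) := by
  have hpair {t : ℝ} (ht : t ∈ Ioo 0 1) : 0 < 1 + t ∧ 0 < 1 - t ∧ 1 + t ≠ 1 - t :=
    ⟨by linarith [ht.1], by linarith [ht.2], by linarith [ht.1]⟩
  refine ⟨fun h ↦ ⟨le_four_ninths_of_forall_mixDH_lt_seiffertT fun t ht ↦ ?_,
    two_div_pi_le_of_forall_seiffertT_lt_mixDH fun t ht ↦ ?_⟩, ?_⟩
  · obtain ⟨h₁, h₂, h₃⟩ := hpair ht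
    exact (h _ _ h₁ h₂ h₃).1
  · obtain ⟨h₁, h₂, h₃⟩ := hpair ht
    exact (h _ _ h₁ h₂ h₃).2
  rintro ⟨hα, hβ⟩ a b ha hb hab
  have hHD := (harmonicMean_lt_contraD ha hb hab).le
  obtain ⟨hlower, hupper⟩ := mixDH_four_ninths_lt_seiffertT_lt_mixDH_two_div_pi ha hb hab
  exact ⟨(mixDH_le_mixDH hHD hα).trans_lt hlower, hupper.trans_le (mixDH_le_mixDH hHD hβ)⟩
end

section
/- For all a, b > 0 with a ≠ b, one has T(a,b) < (2/π)·D(a,b) + (1 − 2/π)·H(a,b). -/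
/-!
With `t = (a - b) / (a + b)` all three means are `(a + b) / 2` times a function of `t`: `T` gives
`t / arctan t`, `D` gives `(1 + 3 t²) / (1 + t²)` and `H` gives `1 - t²`. The claim becomes
`π t (1 + t²) < arctan t · (π + 6 t² - (π - 2) t⁴)` for `0 < t < 1`, with equality at `t = 1`.
For `t ≤ 7/10` the Taylor bound `arctan t ≥ t - t³/3 + t⁵/5 - t⁷/7` suffices; near `t = 1` we use
`arctan t = π/4 - arctan ((1 - t)/(1 + t)) ≥ π/4 - (1 - t)/(1 + t)`, which is exact to first order
at `t = 1`. Both cases then reduce to polynomial inequalities that only need `3 < π < 3.15`.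
-/

open Real

namespace Real

lemma arctan_le_self {x : ℝ} (hx : 0 ≤ x) : arctan x ≤ x := by
  simpa only [tan_arctan] using le_tan (arctan_nonneg.2 hx) (arctan_lt_pi_div_two x)

lemma sub_add_sub_le_arctan {x : ℝ} (hx : 0 ≤ x) :
    x - x ^ 3 / 3 + x ^ 5 / 5 - x ^ 7 / 7 ≤ arctan x := by
  let f : ℝ → ℝ := fun y ↦ arctan y - (y - y ^ 3 / 3 + y ^ 5 / 5 - y ^ 7 / 7)
  have hf (y : ℝ) : HasDerivAt f (y ^ 8 / (1 + y ^ 2)) y := by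
    refine ((hasDerivAt_arctan y).fun_sub ((((hasDerivAt_id' y).fun_sub
      ((hasDerivAt_pow 3 y).div_const 3)).fun_add ((hasDerivAt_pow 5 y).div_const 5)).fun_sub
      ((hasDerivAt_pow 7 y).div_const 7))).congr_deriv ?_
    push_cast
    field_simp
    ring
  simpa [f] using monotone_of_hasDerivAt_nonneg hf (fun y ↦ by positivity) hx

lemma arctan_add_arctan_one_sub_div_one_add {x : ℝ} (hx : -1 < x) :
    arctan x + arctan ((1 - x) / (1 + x)) = π / 4 := by
  have h : 0 < 1 + x := by linarith
  have hden : 1 - x * ((1 - x) / (1 + x)) = (1 + x ^ 2) / (1 + x) := by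
    field_simp
    ring
  rw [arctan_add, ← arctan_one, hden]
  · congr 1
    field_simp
    ring
  · rw [mul_div_assoc', div_lt_one h]
    nlinarith [sq_nonneg x]

lemma pi_div_four_sub_le_arctan {x : ℝ} (hx₀ : -1 < x) (hx₁ : x ≤ 1) :
    π / 4 - (1 - x) / (1 + x) ≤ arctan x := by
  have := arctan_le_self (div_nonneg (sub_nonneg.2 hx₁) (by linarith : (0 : ℝ) ≤ 1 + x))
  linarith [arctan_add_arctan_one_sub_div_one_add hx₀]

end Real

lemma pi_mul_lt_arctan_mul_of_le {t : ℝ} (h₀ : 0 < t) (h₁ : t ≤ 7 / 10) :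
    π * (t * (1 + t ^ 2)) < arctan t * (π + 6 * t ^ 2 - (π - 2) * t ^ 4) := by
  have hN : 0 < π + 6 * t ^ 2 - (π - 2) * t ^ 4 := by
    nlinarith [pi_gt_three, pow_le_one₀ h₀.le (by linarith : t ≤ 1) (n := 4)]
  have hF : ∀ s : ℝ, 0 ≤ s → s ≤ 49 / 100 → 0 < π * (-4 / 3 - 4 * s / 5 + 4 * s ^ 2 / 21 -
      s ^ 3 / 5 + s ^ 4 / 7) + 6 + 8 * s ^ 2 / 15 - 16 * s ^ 3 / 35 - 2 * s ^ 4 / 7 := by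
    intro s hs₀ hs₁
    have hA : -4 / 3 - 4 * s / 5 + 4 * s ^ 2 / 21 - s ^ 3 / 5 + s ^ 4 / 7 < 0 := by
      nlinarith [pow_le_one₀ hs₀ (by linarith : s ≤ 1) (n := 2),
        pow_le_one₀ hs₀ (by linarith : s ≤ 1) (n := 4), pow_nonneg hs₀ 3]
    nlinarith [mul_lt_mul_of_neg_right pi_lt_d2 hA, pow_nonneg hs₀ 2, pow_nonneg hs₀ 3,
      pow_nonneg hs₀ 4, mul_nonneg hs₀ (sub_nonneg.2 hs₁)]
  calc π * (t * (1 + t ^ 2))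
      < (t - t ^ 3 / 3 + t ^ 5 / 5 - t ^ 7 / 7) * (π + 6 * t ^ 2 - (π - 2) * t ^ 4) := by
        -- the difference of the two sides is `t³ F(t²)`, with `F` the polynomial of `hF`
        linear_combination mul_pos (pow_pos h₀ 3) (hF (t ^ 2) (sq_nonneg t) (by nlinarith))
    _ ≤ arctan t * (π + 6 * t ^ 2 - (π - 2) * t ^ 4) :=
        mul_le_mul_of_nonneg_right (sub_add_sub_le_arctan h₀.le) hN.le

lemma pi_mul_lt_arctan_mul_of_ge {t : ℝ} (h₀ : 7 / 10 ≤ t) (h₁ : t < 1) :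
    π * (t * (1 + t ^ 2)) < arctan t * (π + 6 * t ^ 2 - (π - 2) * t ^ 4) := by
  have hπ := pi_gt_three
  have ht : 0 < 1 + t := by linarith
  have hN : 0 < π + 6 * t ^ 2 - (π - 2) * t ^ 4 := by
    nlinarith [pow_le_one₀ (by linarith : 0 ≤ t) h₁.le (n := 4)]
  set C := t * (t ^ 2 - t + 2) / 2 + (1 - t) * (1 + t ^ 2) with hC
  set G := π ^ 2 * (1 + t) ^ 2 * (1 + t ^ 2) / 4 - π * (1 + t) * C - 2 * t ^ 2 * (3 + t ^ 2)
    with hG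
  have hG_pos : 0 < G := by
    -- `G` is a quadratic in `π`, positive at `3` and increasing from there on
    have hG₃ :
        0 < 9 * (1 + t) ^ 2 * (1 + t ^ 2) / 4 - 3 * (1 + t) * C - 2 * t ^ 2 * (3 + t ^ 2) := by
      nlinarith [sq_nonneg t, mul_nonneg (sub_nonneg.2 h₀) (sub_nonneg.2 h₁.le)]
    have hslope : 0 < (π + 3) * (1 + t) * (1 + t ^ 2) / 4 - C := by
      nlinarith [mul_le_mul_of_nonneg_right (by linarith : (6 : ℝ) ≤ π + 3)
        (by positivity : 0 ≤ (1 + t) * (1 + t ^ 2)), sq_nonneg t]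
    nlinarith [mul_pos (mul_pos (sub_pos.2 hπ) hslope) ht]
  have hfactor : (π / 4 - (1 - t) / (1 + t)) * (π + 6 * t ^ 2 - (π - 2) * t ^ 4) -
      π * (t * (1 + t ^ 2)) = (1 - t) / (1 + t) * G := by
    rw [hG, hC]
    field_simp
    ring
  calc π * (t * (1 + t ^ 2))
      < (π / 4 - (1 - t) / (1 + t)) * (π + 6 * t ^ 2 - (π - 2) * t ^ 4) := by
        linarith [mul_pos (div_pos (sub_pos.2 h₁) ht) hG_pos]
    _ ≤ arctan t * (π + 6 * t ^ 2 - (π - 2) * t ^ 4) :=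
        mul_le_mul_of_nonneg_right (pi_div_four_sub_le_arctan (by linarith) h₁.le) hN.le

lemma pi_mul_lt_arctan_mul {t : ℝ} (h₀ : 0 < t) (h₁ : t < 1) :
    π * (t * (1 + t ^ 2)) < arctan t * (π + 6 * t ^ 2 - (π - 2) * t ^ 4) := by
  rcases le_or_gt t (7 / 10) with ht | ht
  · exact pi_mul_lt_arctan_mul_of_le h₀ ht
  · exact pi_mul_lt_arctan_mul_of_ge ht.le h₁

lemma div_arctan_lt {t : ℝ} (h₀ : t ≠ 0) (h₁ : |t| < 1) :
    t / arctan t < 2 / π * ((1 + 3 * t ^ 2) / (1 + t ^ 2)) + (1 - 2 / π) * (1 - t ^ 2) := by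
  wlog ht : 0 < t generalizing t
  · simpa [arctan_neg] using this (neg_ne_zero.2 h₀) (by rwa [abs_neg])
      (neg_pos.2 (h₀.lt_or_gt.resolve_right ht))
  have hrhs : 2 / π * ((1 + 3 * t ^ 2) / (1 + t ^ 2)) + (1 - 2 / π) * (1 - t ^ 2) =
      (π + 6 * t ^ 2 - (π - 2) * t ^ 4) / (π * (1 + t ^ 2)) := by
    field_simp
    ring
  rw [hrhs, div_lt_div_iff₀ (arctan_pos.2 ht) (by positivity)]
  linarith [pi_mul_lt_arctan_mul ht (abs_lt.1 h₁).2]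

section Means

variable {a b : ℝ} (h : a + b ≠ 0)
include h

lemma seiffertT_eq :
    seiffertT a b = (a + b) / 2 * ((a - b) / (a + b) / arctan ((a - b) / (a + b))) := by
  rw [seiffertT]
  field_simp

lemma contraD_eq :
    contraD a b =
      (a + b) / 2 * ((1 + 3 * ((a - b) / (a + b)) ^ 2) / (1 + ((a - b) / (a + b)) ^ 2)) := by
  have : 0 < a ^ 2 + b ^ 2 := by nlinarith [sq_nonneg (a - b), sq_pos_of_ne_zero h]
  rw [contraD]
  field_simp
  ring

lemma harmonicMean_eq : harmonicMean a b = (a + b) / 2 * (1 - ((a - b) / (a + b)) ^ 2) := by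
  rw [harmonicMean]
  field_simp
  ring

end Means

theorem stmt_2 (a b : ℝ) (ha : 0 < a) (hb : 0 < b) (hab : a ≠ b) :
    seiffertT a b < (2 / Real.pi) * contraD a b + (1 - 2 / Real.pi) * harmonicMean a b := by
  have hs : 0 < a + b := add_pos ha hb
  have ht₀ : (a - b) / (a + b) ≠ 0 := div_ne_zero (sub_ne_zero.2 hab) hs.ne'
  have ht₁ : |(a - b) / (a + b)| < 1 := by
    rw [abs_div, abs_of_pos hs, div_lt_one hs, abs_lt]
    constructor <;> linarith
  rw [seiffertT_eq hs.ne', contraD_eq hs.ne', harmonicMean_eq hs.ne']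
  linear_combination mul_lt_mul_of_pos_left (div_arctan_lt ht₀ ht₁) (half_pos hs)
end

section
/- For every β < 2/π there exist a, b > 0 with a ≠ b such that T(a,b) > β·D(a,b) + (1−β)·H(a,b); in fact, there exists T₀ > 1 such that this inequality holds for all a, b > 0 with a/b ∈ (T₀, ∞). -/
open Real

lemma harmonicMean_lt_two_mul_right {a b : ℝ} (ha : 0 < a) (hb : 0 < b) :
    harmonicMean a b < 2 * b := by
  rw [harmonicMean, div_lt_iff₀ (by positivity)]
  nlinarith [mul_pos hb hb]

lemma abs_contraD_sub_left_le {a b : ℝ} (ha : 0 < a) (hb : 0 < b) :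
    |contraD a b - a| ≤ b := by
  have hsq : 0 < a ^ 2 + b ^ 2 := by positivity
  have hdiff : contraD a b - a = b ^ 2 * (b - a) / (a ^ 2 + b ^ 2) := by
    rw [contraD]; field_simp; ring
  rw [hdiff, abs_div, abs_mul, abs_of_pos hsq, abs_of_pos (by positivity), div_le_iff₀ hsq]
  rcases le_total a b with h | h
  · rw [abs_of_nonneg (by linarith)]; nlinarith [mul_pos ha hb, mul_pos hb hb]
  · rw [abs_of_nonpos (by linarith)]; nlinarith [mul_pos ha hb, mul_pos hb hb]

lemma two_div_pi_mul_sub_lt_seiffertT {a b : ℝ} (hb : 0 < b) (hba : b < a) :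
    2 / π * (a - b) < seiffertT a b := by
  have hsum : 0 < a + b := by linarith
  have harctan_pos : 0 < arctan ((a - b) / (a + b)) :=
    arctan_pos.mpr (div_pos (by linarith) hsum)
  have harctan_lt : arctan ((a - b) / (a + b)) < π / 4 := by
    rw [← arctan_one]
    exact arctan_strictMono ((div_lt_one hsum).mpr (by linarith))
  calc 2 / π * (a - b) = (a - b) / (π / 2) := by field_simp
    _ < (a - b) / (2 * arctan ((a - b) / (a + b))) :=
        div_lt_div_of_pos_left (by linarith) (by positivity) (by linarith)

theorem stmt_4 (β : ℝ) (hβ : β < 2 / Real.pi) :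
    ∃ T₀ > (1 : ℝ), ∀ a b : ℝ, 0 < a → 0 < b → a / b ∈ Set.Ioi T₀ →
      β * contraD a b + (1 - β) * harmonicMean a b < seiffertT a b := by
  have hε : 0 < 2 / π - β := by linarith
  have h1β : 0 < 1 - β := by
    have : 2 / π < 1 := (div_lt_one pi_pos).mpr (by linarith [pi_gt_three])
    linarith
  set C := 2 + |β| - β with hC_def
  have hC : 0 < C := by linarith [le_abs_self β]
  refine ⟨1 + C / (2 / π - β), by linarith [div_pos hC hε], fun a b ha hb hab => ?_⟩
  have hCb : C * b < (2 / π - β) * (a - b) := by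
    have hab' : (1 + C / (2 / π - β)) * b < a := (lt_div_iff₀ hb).mp hab
    calc C * b = (2 / π - β) * (C / (2 / π - β) * b) := by
          rw [← mul_assoc, mul_div_cancel₀ _ hε.ne']
      _ < (2 / π - β) * (a - b) := by gcongr; linarith
  have hba : b < a := by nlinarith [mul_pos hC hb]
  have hD : β * (contraD a b - a) ≤ |β| * b := by
    calc β * (contraD a b - a) ≤ |β| * |contraD a b - a| := abs_mul β _ ▸ le_abs_self _
      _ ≤ |β| * b := mul_le_mul_of_nonneg_left (abs_contraD_sub_left_le ha hb) (abs_nonneg β)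
  have hH := mul_lt_mul_of_pos_left (harmonicMean_lt_two_mul_right ha hb) h1β
  have hT := two_div_pi_mul_sub_lt_seiffertT hb hba
  rw [hC_def] at hCb
  linarith
end

section
/- For all a, b > 0 with a ≠ b, one has (1/2)·D(a,b) + (1/2)·H(a,b) < Q(a,b). -/
noncomputable def quadraticMean (a b : ℝ) : ℝ := Real.sqrt ((a ^ 2 + b ^ 2) / 2)

/-!
Both sides are nonnegative, so it suffices to compare squares. Over the common denominator
`2 (a² + b²) (a + b)`, and in the variables `s = a + b`, `d = a - b`, the difference of the squares
is `d⁴ (7 s⁴ + 10 s² d² - d⁴)` up to a positive factor, and `d² < s²` makes the second factor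
positive.
-/

lemma half_contraD_add_half_harmonicMean {a b : ℝ} (hs : a + b ≠ 0) :
    1 / 2 * contraD a b + 1 / 2 * harmonicMean a b =
      ((a ^ 3 + b ^ 3) * (a + b) + 2 * a * b * (a ^ 2 + b ^ 2)) / (2 * (a ^ 2 + b ^ 2) * (a + b)) := by
  have hq : a ^ 2 + b ^ 2 ≠ 0 := by
    contrapose! hs
    have ha : a = 0 := by nlinarith [sq_nonneg a, sq_nonneg b]
    have hb : b = 0 := by nlinarith [sq_nonneg a, sq_nonneg b]
    simp [ha, hb]
  unfold contraD harmonicMean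
  field_simp

lemma sq_half_contraD_add_half_harmonicMean_lt {a b : ℝ} (ha : 0 < a) (hb : 0 < b) (hab : a ≠ b) :
    (1 / 2 * contraD a b + 1 / 2 * harmonicMean a b) ^ 2 < (a ^ 2 + b ^ 2) / 2 := by
  have hs : 0 < a + b := by positivity
  have hd : 0 < (a - b) ^ 4 := (even_two_mul 2).pow_pos (sub_ne_zero.2 hab)
  have hF : 0 < 7 * (a + b) ^ 4 + 10 * (a + b) ^ 2 * (a - b) ^ 2 - (a - b) ^ 4 := by
    have hds : (a - b) ^ 2 < (a + b) ^ 2 := by nlinarith [mul_pos ha hb]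
    nlinarith [sq_nonneg (a - b), sq_nonneg (a + b)]
  have key : (a ^ 2 + b ^ 2) / 2 * (2 * (a ^ 2 + b ^ 2) * (a + b)) ^ 2
      - ((a ^ 3 + b ^ 3) * (a + b) + 2 * a * b * (a ^ 2 + b ^ 2)) ^ 2
      = (a - b) ^ 4 * (7 * (a + b) ^ 4 + 10 * (a + b) ^ 2 * (a - b) ^ 2 - (a - b) ^ 4) / 16 := by
    ring
  rw [half_contraD_add_half_harmonicMean hs.ne', div_pow, div_lt_iff₀ (by positivity)]
  linarith [mul_pos hd hF]

theorem stmt_6 (a b : ℝ) (ha : 0 < a) (hb : 0 < b) (hab : a ≠ b) :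
    (1 / 2) * contraD a b + (1 / 2) * harmonicMean a b < quadraticMean a b := by
  have hM : 0 ≤ 1 / 2 * contraD a b + 1 / 2 * harmonicMean a b := by
    unfold contraD harmonicMean
    positivity
  rw [quadraticMean, Real.lt_sqrt hM]
  exact sq_half_contraD_add_half_harmonicMean_lt ha hb hab
end

section
/- For all a, b > 0 with a ≠ b, the double inequality λ·D(a,b) + (1−λ)·H(a,b) < C(a,b) < μ·D(a,b) + (1−μ)·H(a,b) holds if and only if λ ≤ 2/3 and μ ≥ 1. -/
noncomputable def contraC (a b : ℝ) : ℝ := (a ^ 2 + b ^ 2) / (a + b)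

lemma key (a b c : ℝ) (ha : 0 < a) (hb : 0 < b) :
    contraC a b - (c * contraD a b + (1 - c) * harmonicMean a b)
      = (a - b) ^ 2 * ((a ^ 2 + b ^ 2) - c * (a ^ 2 + a * b + b ^ 2))
        / ((a + b) * (a ^ 2 + b ^ 2)) := by
  unfold contraC contraD harmonicMean
  have h1 : a + b ≠ 0 := by positivity
  have h2 : a ^ 2 + b ^ 2 ≠ 0 := by positivity
  field_simp
  ring

lemma ineq_iff (a b c : ℝ) (ha : 0 < a) (hb : 0 < b) (hab : a ≠ b) :
    (c * contraD a b + (1 - c) * harmonicMean a b < contraC a b) ↔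
      c * (a ^ 2 + a * b + b ^ 2) < a ^ 2 + b ^ 2 := by
  rw [← sub_pos, key a b c ha hb]
  have h1 : 0 < (a + b) * (a ^ 2 + b ^ 2) := by positivity
  have h2 : 0 < (a - b) ^ 2 := by
    have : a - b ≠ 0 := sub_ne_zero.mpr hab
    positivity
  rw [div_pos_iff]
  constructor
  · rintro (⟨h, _⟩ | ⟨_, h⟩)
    · nlinarith
    · linarith
  · intro h
    left
    exact ⟨by nlinarith, h1⟩

theorem stmt_8 (lam mu : ℝ) :
    (∀ a b : ℝ, 0 < a → 0 < b → a ≠ b →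
      lam * contraD a b + (1 - lam) * harmonicMean a b < contraC a b ∧
      contraC a b < mu * contraD a b + (1 - mu) * harmonicMean a b) ↔
    (lam ≤ 2 / 3 ∧ 1 ≤ mu) := by
  constructor
  · intro h
    constructor
    · by_contra hl
      push_neg at hl
      rcases le_or_gt 1 lam with h1 | h1
      · have := ((h 2 1 (by norm_num) (by norm_num) (by norm_num)).1)
        rw [ineq_iff 2 1 lam (by norm_num) (by norm_num) (by norm_num)] at this
        norm_num at this
        linarith
      · set t : ℝ := 3 * lam - 1 with ht
        have htpos : 0 < t := by linarith
        have htne : t ≠ 1 := by intro hc; rw [ht] at hc; nlinarith [hc]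
        have := ((h t 1 htpos (by norm_num) htne).1)
        rw [ineq_iff t 1 lam htpos (by norm_num) htne] at this
        nlinarith [this, sq_nonneg (lam - 1)]
    · by_contra hm
      push_neg at hm
      have hm1 : 0 < 1 - mu := by linarith
      set s : ℝ := mu / (1 - mu) with hs
      have hsm : mu = s * (1 - mu) := by
        rw [hs, div_mul_cancel₀ _ hm1.ne']
      have hsgt : -1 < s := by
        rw [hs, lt_div_iff₀ hm1]; linarith
      have hmu1s : mu * (1 + s) = s := by linear_combination hsm
      set t : ℝ := s + 2 with ht
      have htpos : 0 < t := by linarith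
      have htne : t ≠ 1 := by intro hc; rw [ht] at hc; linarith
      have h2 := ((h t 1 htpos (by norm_num) htne).2)
      rw [← not_le] at h2
      apply h2
      rw [← sub_nonneg, key t 1 mu htpos one_pos]
      apply div_nonneg
      · apply mul_nonneg (sq_nonneg _)
        rw [ht]
        nlinarith [hmu1s, mul_pos hm1 (show (0:ℝ) < 2 * s + 5 by linarith)]
      · positivity
  · rintro ⟨hl, hm⟩ a b ha hb hab
    have hab2 : 0 < (a - b) ^ 2 := by
      have : a - b ≠ 0 := sub_ne_zero.mpr hab
      positivity
    have hX : 0 < a ^ 2 + a * b + b ^ 2 := by positivity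
    constructor
    · rw [ineq_iff a b lam ha hb hab]
      nlinarith [mul_nonneg (show (0:ℝ) ≤ 2/3 - lam by linarith) hX.le, hab2]
    · have hlt : contraC a b - (mu * contraD a b + (1 - mu) * harmonicMean a b) < 0 := by
        rw [key a b mu ha hb]
        apply div_neg_of_neg_of_pos
        · apply mul_neg_of_pos_of_neg hab2
          nlinarith [mul_pos ha hb, mul_nonneg (show (0:ℝ) ≤ mu - 1 by linarith) hX.le]
        · positivity
      linarith
end

section
/- For all a, b > 0 with a ≠ b, one has (2/3)·D(a,b) + (1/3)·H(a,b) < C(a,b) < D(a,b). -/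
lemma sq_add_sq_ne_zero_of_add_ne_zero {a b : ℝ} (h : a + b ≠ 0) : a ^ 2 + b ^ 2 ≠ 0 := by
  contrapose! h
  have ha : a = 0 := by nlinarith [sq_nonneg a, sq_nonneg b]
  have hb : b = 0 := by nlinarith [sq_nonneg a, sq_nonneg b]
  simp [ha, hb]

lemma contraD_sub_contraC {a b : ℝ} (h : a + b ≠ 0) :
    contraD a b - contraC a b = a * b * (a - b) ^ 2 / ((a + b) * (a ^ 2 + b ^ 2)) := by
  have hq := sq_add_sq_ne_zero_of_add_ne_zero h
  unfold contraC contraD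
  field_simp
  ring

lemma three_mul_contraC_sub_two_mul_contraD_sub_harmonicMean {a b : ℝ} (h : a + b ≠ 0) :
    3 * contraC a b - 2 * contraD a b - harmonicMean a b
      = (a - b) ^ 4 / ((a + b) * (a ^ 2 + b ^ 2)) := by
  have hq := sq_add_sq_ne_zero_of_add_ne_zero h
  unfold harmonicMean contraC contraD
  field_simp
  ring

theorem stmt_9 (a b : ℝ) (ha : 0 < a) (hb : 0 < b) (hab : a ≠ b) :
    (2 / 3) * contraD a b + (1 / 3) * harmonicMean a b < contraC a b ∧
    contraC a b < contraD a b := by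
  have hs : 0 < a + b := by positivity
  have hden : 0 < (a + b) * (a ^ 2 + b ^ 2) := by positivity
  have hsub : a - b ≠ 0 := sub_ne_zero.mpr hab
  have hgap₁ := three_mul_contraC_sub_two_mul_contraD_sub_harmonicMean hs.ne'
  have hgap₂ := contraD_sub_contraC hs.ne'
  have hpos₁ : 0 < (a - b) ^ 4 / ((a + b) * (a ^ 2 + b ^ 2)) := by positivity
  have hpos₂ : 0 < a * b * (a - b) ^ 2 / ((a + b) * (a ^ 2 + b ^ 2)) := by positivity
  constructor <;> linarith
end

section
/- The limit as t → 1⁺ of the ratio ((t²+1)·(t² − 4t·arctan((t−1)/(t+1)) − 1)) / (2(t−1)²·(t²+t+1)·arctan((t−1)/(t+1))) equals 4/9. -/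
/-!
With u = (t - 1)/(t + 1), so that t = (1 + u)/(1 - u) and u → 0⁺ as t → 1⁺, the ratio factors as
  (t² + 1)/(2(t² + t + 1)) · (u - (1 - u²) arctan u)/u³ · u / arctan u.
The outer factors tend to 1/3 and 1. The middle one tends to 4/3 by one application of
L'Hôpital's rule: the numerator has derivative 2u²/(1 + u²) + 2u arctan u, and divided by 3u²
this is 2/(3(1 + u²)) + (2/3) arctan u / u → 2/3 + 2/3.
-/

open Real Filter Topology

theorem Real.tendsto_arctan_div_self : Tendsto (fun x => arctan x / x) (𝓝[≠] 0) (𝓝 1) := by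
  have h := hasDerivAt_iff_tendsto_slope.mp (hasDerivAt_arctan 0)
  rw [show slope arctan 0 = fun x => arctan x / x by ext; simp [slope_def_field]] at h
  simpa using h

theorem hasDerivAt_self_sub_one_sub_sq_mul_arctan (u : ℝ) :
    HasDerivAt (fun u => u - (1 - u ^ 2) * arctan u)
      (2 * u ^ 2 / (1 + u ^ 2) + 2 * u * arctan u) u := by
  refine ((hasDerivAt_id' u).sub
    (((hasDerivAt_pow 2 u).const_sub 1).mul (hasDerivAt_arctan u))).congr_deriv ?_
  field_simp
  ring

theorem tendsto_self_sub_one_sub_sq_mul_arctan_div_cube :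
    Tendsto (fun u => (u - (1 - u ^ 2) * arctan u) / u ^ 3) (𝓝[≠] 0) (𝓝 (4 / 3)) := by
  have hcube (u : ℝ) : HasDerivAt (fun u : ℝ => u ^ 3) (3 * u ^ 2) u := by
    simpa using hasDerivAt_pow 3 u
  refine HasDerivAt.lhopital_zero_nhdsNE (.of_forall hasDerivAt_self_sub_one_sub_sq_mul_arctan)
    (.of_forall hcube) ?_ ?_ ?_ ?_
  · filter_upwards [self_mem_nhdsWithin] with u (hu : u ≠ 0)
    positivity
  · exact tendsto_nhdsWithin_of_tendsto_nhds <|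
      (by fun_prop : Continuous fun u => u - (1 - u ^ 2) * arctan u).tendsto' 0 0 (by simp)
  · exact tendsto_nhdsWithin_of_tendsto_nhds <| (continuous_pow 3).tendsto' (0 : ℝ) 0 (by simp)
  · have hquot : Tendsto (fun u : ℝ => 2 / (3 * (1 + u ^ 2))) (𝓝[≠] 0) (𝓝 (2 / 3)) :=
      tendsto_nhdsWithin_of_tendsto_nhds <|
        (continuous_const.div (by fun_prop) fun u => by positivity).tendsto' 0 _ (by norm_num)
    have hlim := hquot.add (tendsto_arctan_div_self.const_mul (2 / 3))
    rw [show (2 / 3 + 2 / 3 * 1 : ℝ) = 4 / 3 by norm_num] at hlim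
    refine hlim.congr' ?_
    filter_upwards [self_mem_nhdsWithin] with u (hu : u ≠ 0)
    field_simp

theorem tendsto_cayley_nhdsGT_one :
    Tendsto (fun t : ℝ => (t - 1) / (t + 1)) (𝓝[>] 1) (𝓝[≠] 0) := by
  refine tendsto_nhdsWithin_iff.mpr ⟨tendsto_nhdsWithin_of_tendsto_nhds ?_, ?_⟩
  · exact (continuousAt_id.sub continuousAt_const).div (continuousAt_id.add continuousAt_const)
      (by norm_num) |>.tendsto.trans (by norm_num)
  · filter_upwards [self_mem_nhdsWithin] with t (ht : 1 < t)
    exact div_ne_zero (by linarith) (by linarith)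

theorem cayley_factorization {t u A : ℝ} (hu : u = (t - 1) / (t + 1)) (ht₁ : t - 1 ≠ 0)
    (ht₂ : t + 1 ≠ 0) (hA : A ≠ 0) :
    (t ^ 2 + 1) * (t ^ 2 - 4 * t * A - 1) / (2 * (t - 1) ^ 2 * (t ^ 2 + t + 1) * A) =
      (t ^ 2 + 1) / (2 * (t ^ 2 + t + 1)) * ((u - (1 - u ^ 2) * A) / u ^ 3) * (A / u)⁻¹ := by
  have : t ^ 2 + t + 1 ≠ 0 := by nlinarith [sq_nonneg (t + 1 / 2)]
  subst hu
  field_simp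
  ring

theorem stmt_16 :
    Filter.Tendsto
      (fun t : ℝ =>
        ((t ^ 2 + 1) * (t ^ 2 - 4 * t * Real.arctan ((t - 1) / (t + 1)) - 1)) /
          (2 * (t - 1) ^ 2 * (t ^ 2 + t + 1) * Real.arctan ((t - 1) / (t + 1))))
      (nhdsWithin 1 (Set.Ioi (1 : ℝ))) (nhds (4 / 9)) := by
  have hcoef : Tendsto (fun t : ℝ => (t ^ 2 + 1) / (2 * (t ^ 2 + t + 1))) (𝓝[>] 1) (𝓝 (1 / 3)) :=
    tendsto_nhdsWithin_of_tendsto_nhds <|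
      (by fun_prop : Continuous fun t : ℝ => t ^ 2 + 1).continuousAt.div (by fun_prop)
        (by norm_num) |>.tendsto.trans (by norm_num)
  have hlim := (hcoef.mul (tendsto_self_sub_one_sub_sq_mul_arctan_div_cube.comp
    tendsto_cayley_nhdsGT_one)).mul
      ((tendsto_arctan_div_self.comp tendsto_cayley_nhdsGT_one).inv₀ one_ne_zero)
  rw [show (1 / 3 * (4 / 3) * 1⁻¹ : ℝ) = 4 / 9 by norm_num] at hlim
  refine hlim.congr' ?_
  filter_upwards [self_mem_nhdsWithin] with t (ht : 1 < t)
  have hu : (t - 1) / (t + 1) ≠ 0 := div_ne_zero (by linarith) (by linarith)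
  exact (cayley_factorization rfl (by linarith) (by linarith) (mt arctan_eq_zero_iff.mp hu)).symm
end

section
/- For all a, b > 0 with a ≠ b and every c ∈ (0,1), setting t = a/b with t > 1 (assuming a > b), one has T(a,b) − (c·D(a,b) + (1−c)·H(a,b)) = b · (c(t+1)(t³+1) + 2(1−c)t(t²+1)) / (2(t+1)(t²+1)·arctan((t−1)/(t+1))) · f_c(t), where f_c(t) = (t⁴−1)/(c t⁴ + (2−c) t³ + (2−c) t + c) − 2 arctan((t−1)/(t+1)). -/
noncomputable def f (c t : ℝ) : ℝ :=
  (t ^ 4 - 1) / (c * t ^ 4 + (2 - c) * t ^ 3 + (2 - c) * t + c)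
    - 2 * Real.arctan ((t - 1) / (t + 1))

section Homogeneity

variable {k : ℝ} (x y : ℝ)

theorem harmonicMean_mul_mul (hk : k ≠ 0) :
    harmonicMean (k * x) (k * y) = k * harmonicMean x y := by
  rw [harmonicMean, harmonicMean, ← mul_add,
    show 2 * (k * x) * (k * y) = k * (k * (2 * x * y)) by ring, mul_div_mul_left _ _ hk,
    mul_div_assoc]

theorem seiffertT_mul_mul (hk : k ≠ 0) : seiffertT (k * x) (k * y) = k * seiffertT x y := by
  rw [seiffertT, seiffertT, ← mul_sub, ← mul_add, mul_div_mul_left _ _ hk, mul_div_assoc]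

theorem contraD_mul_mul (hk : k ≠ 0) : contraD (k * x) (k * y) = k * contraD x y := by
  have hk2 : k ^ 2 ≠ 0 := pow_ne_zero 2 hk
  rw [contraD, contraD, mul_pow, mul_pow, mul_pow, mul_pow, ← mul_add, ← mul_add,
    show k ^ 3 = k ^ 2 * k by ring, mul_assoc, mul_div_mul_left _ _ hk2, mul_div_assoc]

end Homogeneity

theorem f_denom_eq (c t : ℝ) :
    c * t ^ 4 + (2 - c) * t ^ 3 + (2 - c) * t + c
      = c * (t + 1) * (t ^ 3 + 1) + 2 * (1 - c) * t * (t ^ 2 + 1) := by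
  ring

theorem f_denom_pos {c t : ℝ} (hc0 : 0 ≤ c) (hc2 : c < 2) (ht : 0 < t) :
    0 < c * t ^ 4 + (2 - c) * t ^ 3 + (2 - c) * t + c := by
  have h2c : 0 < 2 - c := by linarith
  positivity

theorem mix_contraD_harmonicMean_eq (c : ℝ) {t : ℝ} (ht : 0 < t) :
    c * contraD t 1 + (1 - c) * harmonicMean t 1
      = (c * t ^ 4 + (2 - c) * t ^ 3 + (2 - c) * t + c) / ((t + 1) * (t ^ 2 + 1)) := by
  have ht1 : t + 1 ≠ 0 := by positivity
  have ht2 : t ^ 2 + 1 ≠ 0 := by positivity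
  rw [contraD, harmonicMean]
  field_simp
  ring

theorem seiffertT_sub_mix_eq_mul_f {c t : ℝ} (ht : 1 < t)
    (hP : c * t ^ 4 + (2 - c) * t ^ 3 + (2 - c) * t + c ≠ 0) :
    seiffertT t 1 - (c * contraD t 1 + (1 - c) * harmonicMean t 1) =
      (c * (t + 1) * (t ^ 3 + 1) + 2 * (1 - c) * t * (t ^ 2 + 1)) /
        (2 * (t + 1) * (t ^ 2 + 1) * Real.arctan ((t - 1) / (t + 1))) * f c t := by
  have hA : Real.arctan ((t - 1) / (t + 1)) ≠ 0 :=
    (Real.arctan_pos.2 (div_pos (by linarith) (by linarith))).ne'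
  have ht1 : t + 1 ≠ 0 := by linarith
  have ht2 : t ^ 2 + 1 ≠ 0 := by positivity
  rw [mix_contraD_harmonicMean_eq c (by linarith), seiffertT, f, ← f_denom_eq]
  generalize c * t ^ 4 + (2 - c) * t ^ 3 + (2 - c) * t + c = P at hP ⊢
  generalize Real.arctan ((t - 1) / (t + 1)) = A at hA ⊢
  field_simp
  ring

theorem stmt_19_general (a b c : ℝ) (hb : 0 < b) (hab : b < a)
    (hc : c ∈ Set.Ioo (0 : ℝ) 1) :
    seiffertT a b - (c * contraD a b + (1 - c) * harmonicMean a b) =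
      b * ((c * (a / b + 1) * ((a / b) ^ 3 + 1) + 2 * (1 - c) * (a / b) * ((a / b) ^ 2 + 1)) /
        (2 * (a / b + 1) * ((a / b) ^ 2 + 1) * Real.arctan ((a / b - 1) / (a / b + 1)))) *
        f c (a / b) := by
  obtain ⟨hc0, hc1⟩ := hc
  have hb0 : b ≠ 0 := hb.ne'
  have ht : 1 < a / b := (one_lt_div hb).2 hab
  have hscale {M : ℝ → ℝ → ℝ} (hM : M (b * (a / b)) (b * 1) = b * M (a / b) 1) :
      M a b = b * M (a / b) 1 := by
    rwa [mul_div_cancel₀ a hb0, mul_one] at hM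
  rw [hscale (seiffertT_mul_mul _ _ hb0), hscale (contraD_mul_mul _ _ hb0),
    hscale (harmonicMean_mul_mul _ _ hb0), mul_assoc,
    ← seiffertT_sub_mix_eq_mul_f ht (f_denom_pos hc0.le (by linarith) (by linarith)).ne']
  ring

theorem stmt_19 (a b c : ℝ) (ha : 0 < a) (hb : 0 < b) (hab : b < a)
    (hc : c ∈ Set.Ioo (0 : ℝ) 1) :
    seiffertT a b - (c * contraD a b + (1 - c) * harmonicMean a b) =
      b * ((c * (a / b + 1) * ((a / b) ^ 3 + 1) + 2 * (1 - c) * (a / b) * ((a / b) ^ 2 + 1)) /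
        (2 * (a / b + 1) * ((a / b) ^ 2 + 1) * Real.arctan ((a / b - 1) / (a / b + 1)))) *
        f c (a / b) :=
  stmt_19_general a b c hb hab hc
end
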